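/- Let L : E₄ → ℤ/4ℤ be any surjective ℤ/4ℤ-linear map. If b ∈ E₄ is nonzero and d ∈ E₄ satisfies L(d) = 1, then there exists a ∈ E₄ such that L(ab) ∈ {1, 2}; consequently, if L(ab) = 0 for all a ∈ E₄ then b = 0. -/
import Mathlib


/-- the Galois ring E₄ = ℤ[ω]/4ℤ[ω] = GR(4²), realized as pairs a + bω with
a, b ∈ ℤ/4ℤ, where ω² + ω + 1 = 0 -/
structure E4 : Type where
  re : ZMod 4
  im : ZMod 4
deriving DecidableEq, Fintype

namespace E4

instance : Zero E4 := ⟨⟨0, 0⟩⟩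
instance : One E4 := ⟨⟨1, 0⟩⟩
instance : Add E4 := ⟨fun x y => ⟨x.re + y.re, x.im + y.im⟩⟩
instance : Neg E4 := ⟨fun x => ⟨-x.re, -x.im⟩⟩
instance : Mul E4 :=
  ⟨fun x y => ⟨x.re * y.re - x.im * y.im, x.re * y.im + x.im * y.re - x.im * y.im⟩⟩

theorem zero_def : (0 : E4) = ⟨0, 0⟩ := rfl
theorem one_def : (1 : E4) = ⟨1, 0⟩ := rfl
theorem add_def (x y : E4) : x + y = ⟨x.re + y.re, x.im + y.im⟩ := rfl
theorem neg_def (x : E4) : -x = ⟨-x.re, -x.im⟩ := rfl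
theorem mul_def (x y : E4) :
    x * y = ⟨x.re * y.re - x.im * y.im, x.re * y.im + x.im * y.re - x.im * y.im⟩ := rfl

instance : CommRing E4 where
  add_assoc := fun ⟨a, b⟩ ⟨c, d⟩ ⟨e, f⟩ =>
    congrArg₂ E4.mk (add_assoc a c e) (add_assoc b d f)
  zero_add := fun ⟨a, b⟩ => congrArg₂ E4.mk (zero_add a) (zero_add b)
  add_zero := fun ⟨a, b⟩ => congrArg₂ E4.mk (add_zero a) (add_zero b)
  add_comm := fun ⟨a, b⟩ ⟨c, d⟩ =>
    congrArg₂ E4.mk (add_comm a c) (add_comm b d)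
  left_distrib := fun ⟨a, b⟩ ⟨c, d⟩ ⟨e, f⟩ =>
    congrArg₂ E4.mk
      (show a * (c + e) - b * (d + f) = (a * c - b * d) + (a * e - b * f) by ring)
      (show a * (d + f) + b * (c + e) - b * (d + f)
          = (a * d + b * c - b * d) + (a * f + b * e - b * f) by ring)
  right_distrib := fun ⟨a, b⟩ ⟨c, d⟩ ⟨e, f⟩ =>
    congrArg₂ E4.mk
      (show (a + c) * e - (b + d) * f = (a * e - b * f) + (c * e - d * f) by ring)
      (show (a + c) * f + (b + d) * e - (b + d) * f
          = (a * f + b * e - b * f) + (c * f + d * e - d * f) by ring)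
  zero_mul := fun ⟨a, b⟩ =>
    congrArg₂ E4.mk (show 0 * a - 0 * b = 0 by ring)
      (show 0 * b + 0 * a - 0 * b = 0 by ring)
  mul_zero := fun ⟨a, b⟩ =>
    congrArg₂ E4.mk (show a * 0 - b * 0 = 0 by ring)
      (show a * 0 + b * 0 - b * 0 = 0 by ring)
  mul_assoc := fun ⟨a, b⟩ ⟨c, d⟩ ⟨e, f⟩ =>
    congrArg₂ E4.mk
      (show (a * c - b * d) * e - (a * d + b * c - b * d) * f
          = a * (c * e - d * f) - b * (c * f + d * e - d * f) by ring)
      (show (a * c - b * d) * f + (a * d + b * c - b * d) * e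
              - (a * d + b * c - b * d) * f
          = a * (c * f + d * e - d * f) + b * (c * e - d * f)
              - b * (c * f + d * e - d * f) by ring)
  one_mul := fun ⟨a, b⟩ =>
    congrArg₂ E4.mk (show 1 * a - 0 * b = a by ring)
      (show 1 * b + 0 * a - 0 * b = b by ring)
  mul_one := fun ⟨a, b⟩ =>
    congrArg₂ E4.mk (show a * 1 - b * 0 = a by ring)
      (show a * 0 + b * 1 - b * 0 = b by ring)
  neg_add_cancel := fun ⟨a, b⟩ =>
    congrArg₂ E4.mk (neg_add_cancel a) (neg_add_cancel b)
  mul_comm := fun ⟨a, b⟩ ⟨c, d⟩ =>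
    congrArg₂ E4.mk (show a * c - b * d = c * a - d * b by ring)
      (show a * d + b * c - b * d = c * b + d * a - d * b by ring)
  nsmul := nsmulRec
  zsmul := zsmulRec

end E4

/-- the image of the primitive cube root of unity ω in E₄ -/
def omg : E4 := ⟨0, 1⟩
/-- the conjugate root ω̄ = -1 - ω -/
def omgBar : E4 := -1 - omg
/-- ψ = ω - 1 -/
def psi : E4 := omg - 1
/-- conjugation a + bω ↦ a + bω̄ -/
def conjE : E4 → E4 := fun z => ⟨z.re - z.im, -z.im⟩
/-- the trace Tr(z) = z + conj z, expressed with values in ℤ/4ℤ -/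
def TrZ : E4 → ZMod 4 := fun z => 2 * z.re - z.im
/-- canonical embedding of ℤ/4ℤ into E₄ -/
def ofZ4 : ZMod 4 → E4 := fun c => ⟨c, 0⟩
/-- Ω = {±1, ±ω, ±ω̄} -/
def Omega : Finset E4 := {1, omg, omgBar, -1, -omg, -omgBar}
/-- ψΩ -/
def psiOmega : Finset E4 := Omega.image (fun x => psi * x)
/-- the Doob weight on E₄ -/
def wtE (v : E4) : ℕ := if v = 0 then 0 else if v ∈ Omega then 1 else 2
/-- the Doob coweight on E₄ -/
def waE (v : E4) : ℕ := if v = 0 then 0 else if v ∈ psiOmega then 1 else 2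

lemma L_key : ∀ x y r s : ZMod 4, r * x + s * y = 1 →
    ∀ b : E4, b ≠ 0 → ∃ a : E4,
      ((a * b).re * x + (a * b).im * y = 1 ∨ (a * b).re * x + (a * b).im * y = 2) := by
  decide

/-- For a surjective ℤ/4ℤ-linear map L : E₄ → ℤ/4ℤ and d with L(d) = 1:
for every nonzero b there is a with L(ab) ∈ {1,2}; consequently, if L(ab) = 0
for all a then b = 0. -/
theorem L_nondegenerate (L : E4 → ZMod 4)
    (hadd : ∀ z w : E4, L (z + w) = L z + L w)
    (hsmul : ∀ (c : ZMod 4) (z : E4), L (ofZ4 c * z) = c * L z)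
    (hsurj : Function.Surjective L)
    (d : E4) (hd : L d = 1) :
    (∀ b : E4, b ≠ 0 → ∃ a : E4, L (a * b) = 1 ∨ L (a * b) = 2) ∧
    (∀ b : E4, (∀ a : E4, L (a * b) = 0) → b = 0) := by
  set x := L ⟨1, 0⟩ with hx
  set y := L ⟨0, 1⟩ with hy
  have hform : ∀ z : E4, L z = z.re * x + z.im * y := by
    intro z
    have h1 : ofZ4 z.re * ⟨1, 0⟩ + ofZ4 z.im * ⟨0, 1⟩ = z := by
      show (⟨z.re * 1 - 0 * 0, z.re * 0 + 0 * 1 - 0 * 0⟩ + ⟨z.im * 0 - 0 * 1,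
        z.im * 1 + 0 * 0 - 0 * 1⟩ : E4) = z
      show (⟨z.re * 1 - 0 * 0 + (z.im * 0 - 0 * 1),
        z.re * 0 + 0 * 1 - 0 * 0 + (z.im * 1 + 0 * 0 - 0 * 1)⟩ : E4) = z
      cases z; simp
    calc L z = L (ofZ4 z.re * ⟨1, 0⟩ + ofZ4 z.im * ⟨0, 1⟩) := by rw [h1]
      _ = z.re * x + z.im * y := by rw [hadd, hsmul, hsmul]
  obtain ⟨w, hw⟩ := hsurj 1
  have hgen : w.re * x + w.im * y = 1 := by rw [← hform]; exact hw
  have main : ∀ b : E4, b ≠ 0 → ∃ a : E4, L (a * b) = 1 ∨ L (a * b) = 2 := by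
    intro b hb
    obtain ⟨a, ha⟩ := L_key x y w.re w.im hgen b hb
    exact ⟨a, by rw [hform]; exact ha⟩
  refine ⟨main, fun b hb => ?_⟩
  by_contra hne
  obtain ⟨a, ha⟩ := main b hne
  rw [hb a] at ha
  rcases ha with h | h <;> exact absurd h (by decide)
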